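/- Let (X₁,C₁),…,(Xₙ,Cₙ) be i.i.d. pairs where Xᵢ is a square-integrable real random variable with variance σ², Cᵢ is a random variable taking values in a finite set {1,…,L} with P(Cᵢ = a) = p_a, and Xᵢ is independent of Cᵢ. Let X̄ = (1/n)∑ᵢ Xᵢ and p̂_a = (1/n)∑ᵢ 1{Cᵢ = a}. Then ∑_{a=1}^{L} E[ ( ∑_{i=1}^n 2(1{Cᵢ = a} - p̂_a)(X̄ - Xᵢ) )² ] = 4(n-1)·σ²·∑_{a=1}^{L} p_a(1 - p_a). -/

import Mathlib

/-!
Put `U i = 1{C i = a} - p_a` and `V k = X k - E[X]`. The centering matrix `H = I - J / n`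
kills constant vectors on either side, so the gradient coordinate equals
`-2 ∑_{i,k} H i k * U i * V k`. Because the pairs `(X i, C i)` are independent and `X i ⊥ C i`,
all the `U i` and `V k` are jointly independent and centred, so the products `U i * V k` are
orthogonal in `L²`, each with second moment `p_a (1 - p_a) σ²`. Hence the second moment of the
gradient coordinate is `4 p_a (1 - p_a) σ² ∑_{i,k} (H i k)² = 4 (n - 1) p_a (1 - p_a) σ²`.
-/

open MeasureTheory ProbabilityTheory

lemma prod_integral_ite_mul_ite {Ω ι : Type*} [MeasurableSpace Ω] {μ : Measure Ω}
    [IsProbabilityMeasure μ] [Fintype ι] [DecidableEq ι] {V : ι → Ω → ℝ} {s : ℝ}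
    (h0 : ∀ m, ∫ ω, V m ω ∂μ = 0) (h2 : ∀ m, ∫ ω, V m ω ^ 2 ∂μ = s) (j l : ι) :
    ∏ m, ∫ ω, (if m = j then V m ω else 1) * (if m = l then V m ω else 1) ∂μ
      = if j = l then s else 0 := by
  split_ifs with hjl
  · subst hjl
    rw [Fintype.prod_eq_single j fun m hm => by simp [hm]]
    simp [← sq, h2]
  · exact Finset.prod_eq_zero (Finset.mem_univ j) (by simp [hjl, h0])

section Independence

variable {Ω α β ι : Type*} [MeasurableSpace Ω] [MeasurableSpace α] [MeasurableSpace β]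
  {μ : Measure Ω} [Fintype ι] {X : ι → Ω → α} {C : ι → Ω → β}

lemma ProbabilityTheory.iIndepFun.integral_prod_mul_comp
    (hind : iIndepFun (fun i ω => (X i ω, C i ω)) μ) (hXC : ∀ i, IndepFun (X i) (C i) μ)
    (hX : ∀ i, AEMeasurable (X i) μ) (hC : ∀ i, AEMeasurable (C i) μ)
    {f : ι → α → ℝ} {g : ι → β → ℝ} (hf : ∀ i, Measurable (f i)) (hg : ∀ i, Measurable (g i)) :
    ∫ ω, ∏ i, f i (X i ω) * g i (C i ω) ∂μ
      = ∏ i, (∫ ω, f i (X i ω) ∂μ) * ∫ ω, g i (C i ω) ∂μ := by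
  rw [hind.integral_fun_prod_comp (f := fun i (z : α × β) => f i z.1 * g i z.2)
    (fun i => (hX i).prodMk (hC i)) fun i => by fun_prop]
  exact Finset.prod_congr rfl fun i _ => (hXC i).integral_fun_comp_mul_comp (hX i) (hC i)
    (hf i).aestronglyMeasurable (hg i).aestronglyMeasurable

lemma integral_mul_mul_eq_ite [DecidableEq ι] (hind : iIndepFun (fun i ω => (X i ω, C i ω)) μ)
    (hXC : ∀ i, IndepFun (X i) (C i) μ) (hX : ∀ i, AEMeasurable (X i) μ)
    (hC : ∀ i, AEMeasurable (C i) μ) {v : α → ℝ} {u : β → ℝ} (hv : Measurable v)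
    (hu : Measurable u) {s t : ℝ} (hv0 : ∀ m, ∫ ω, v (X m ω) ∂μ = 0)
    (hv2 : ∀ m, ∫ ω, v (X m ω) ^ 2 ∂μ = s) (hu0 : ∀ m, ∫ ω, u (C m ω) ∂μ = 0)
    (hu2 : ∀ m, ∫ ω, u (C m ω) ^ 2 ∂μ = t) (i k j l : ι) :
    ∫ ω, u (C i ω) * v (X k ω) * (u (C j ω) * v (X l ω)) ∂μ
      = if (i, k) = (j, l) then t * s else 0 := by
  have := hind.isProbabilityMeasure
  have hprod : ∀ ω, u (C i ω) * v (X k ω) * (u (C j ω) * v (X l ω))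
      = ∏ m, ((if m = k then v (X m ω) else 1) * (if m = l then v (X m ω) else 1))
          * ((if m = i then u (C m ω) else 1) * (if m = j then u (C m ω) else 1)) := by
    intro ω
    simp only [Finset.prod_mul_distrib, Fintype.prod_ite_eq']
    ring
  simp_rw [hprod]
  rw [hind.integral_prod_mul_comp hXC hX hC
      (f := fun m x => (if m = k then v x else 1) * (if m = l then v x else 1))
      (g := fun m c => (if m = i then u c else 1) * (if m = j then u c else 1))
      (fun m => by apply Measurable.mul <;> split_ifs <;> fun_prop)
      (fun m => by apply Measurable.mul <;> split_ifs <;> fun_prop),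
    Finset.prod_mul_distrib, prod_integral_ite_mul_ite hv0 hv2, prod_integral_ite_mul_ite hu0 hu2]
  simp only [Prod.mk.injEq]
  split_ifs <;> simp_all [mul_comm]

end Independence

lemma integral_sq_sum_mul_of_orthogonal {Ω κ : Type*} [MeasurableSpace Ω] {μ : Measure Ω}
    [Fintype κ] [DecidableEq κ] {W : κ → Ω → ℝ} {s : ℝ}
    (hint : ∀ p q, Integrable (fun ω => W p ω * W q ω) μ)
    (horth : ∀ p q, ∫ ω, W p ω * W q ω ∂μ = if p = q then s else 0) (c : κ → ℝ) :
    ∫ ω, (∑ p, c p * W p ω) ^ 2 ∂μ = s * ∑ p, c p ^ 2 := by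
  calc ∫ ω, (∑ p, c p * W p ω) ^ 2 ∂μ
      = ∫ ω, ∑ p, ∑ q, c p * c q * (W p ω * W q ω) ∂μ := by
        simp_rw [sq, Finset.sum_mul_sum, mul_mul_mul_comm]
    _ = ∑ p, ∑ q, c p * c q * ∫ ω, W p ω * W q ω ∂μ := by
        rw [integral_finsetSum _ fun p _ =>
          integrable_finsetSum _ fun q _ => (hint p q).const_mul _]
        simp_rw [integral_finsetSum _ fun q _ => (hint _ q).const_mul _, integral_const_mul]
    _ = s * ∑ p, c p ^ 2 := by
        simp [horth, Finset.mul_sum, sq, mul_comm]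

lemma ite_eq_one_zero_eq_indicator {Ω β : Type*} [DecidableEq β] (Y : Ω → β) (a : β) :
    (fun ω => if Y ω = a then (1 : ℝ) else 0) = (Y ⁻¹' {a}).indicator fun _ => 1 := by
  ext ω
  by_cases h : Y ω = a <;> simp [h]

section Bernoulli

variable {Ω β : Type*} [MeasurableSpace Ω] [MeasurableSpace β] [MeasurableSingletonClass β]
  [DecidableEq β] {μ : Measure Ω} {Y : Ω → β}

lemma integral_ite_eq_one_zero (hY : AEMeasurable Y μ) (a : β) :
    ∫ ω, (if Y ω = a then (1 : ℝ) else 0) ∂μ = μ.real {ω | Y ω = a} := by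
  rw [ite_eq_one_zero_eq_indicator,
    integral_indicator₀ (hY.nullMeasurableSet_preimage (measurableSet_singleton a)),
    setIntegral_const, smul_eq_mul, mul_one]
  rfl

variable [IsProbabilityMeasure μ] {a : β} {p : ℝ}

lemma integrable_ite_eq_one_zero (hY : AEMeasurable Y μ) (a : β) :
    Integrable (fun ω => if Y ω = a then (1 : ℝ) else 0) μ := by
  rw [ite_eq_one_zero_eq_indicator]
  exact (integrable_const 1).indicator₀ (hY.nullMeasurableSet_preimage (measurableSet_singleton a))

lemma integral_ite_eq_one_zero_sub (hY : AEMeasurable Y μ) (hp : μ.real {ω | Y ω = a} = p) :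
    ∫ ω, ((if Y ω = a then (1 : ℝ) else 0) - p) ∂μ = 0 := by
  rw [integral_sub (integrable_ite_eq_one_zero hY a) (integrable_const p),
    integral_ite_eq_one_zero hY, hp]
  simp

lemma integral_ite_eq_one_zero_sub_sq (hY : AEMeasurable Y μ)
    (hp : μ.real {ω | Y ω = a} = p) :
    ∫ ω, ((if Y ω = a then (1 : ℝ) else 0) - p) ^ 2 ∂μ = p * (1 - p) := by
  have hsq : ∀ ω, ((if Y ω = a then (1 : ℝ) else 0) - p) ^ 2
      = (1 - 2 * p) * (if Y ω = a then (1 : ℝ) else 0) + p ^ 2 := by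
    intro ω
    split_ifs <;> ring
  simp_rw [hsq]
  rw [integral_add ((integrable_ite_eq_one_zero hY a).const_mul _) (integrable_const _),
    integral_const_mul, integral_ite_eq_one_zero hY, hp]
  simp
  ring

end Bernoulli

noncomputable def centeringMatrix (ι : Type*) [Fintype ι] [DecidableEq ι] : Matrix ι ι ℝ :=
  Matrix.of fun i k => (if i = k then 1 else 0) - (Fintype.card ι : ℝ)⁻¹

section Centering

variable {ι : Type*} [Fintype ι] [DecidableEq ι]

lemma sum_sub_mean_mul_mean_sub (u x : ι → ℝ) (p M : ℝ) :
    ∑ i, (u i - (∑ j, u j) / Fintype.card ι) * ((∑ j, x j) / Fintype.card ι - x i)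
      = -∑ i, ∑ k, centeringMatrix ι i k * ((u i - p) * (x k - M)) := by
  rcases isEmpty_or_nonempty ι with hι | hι
  · simp
  have hn : (Fintype.card ι : ℝ) ≠ 0 := Nat.cast_ne_zero.mpr Fintype.card_ne_zero
  simp only [centeringMatrix, Matrix.of_apply, sub_mul, ite_mul, one_mul, zero_mul, mul_sub,
    Finset.sum_sub_distrib, Fintype.sum_ite_eq, ← Finset.mul_sum, ← Finset.sum_mul,
    Finset.sum_const, Finset.card_univ, nsmul_eq_mul]
  field_simp
  ring

lemma sum_centeringMatrix_sq [Nonempty ι] :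
    ∑ i, ∑ k, centeringMatrix ι i k ^ 2 = Fintype.card ι - 1 := by
  have hn : (Fintype.card ι : ℝ) ≠ 0 := Nat.cast_ne_zero.mpr Fintype.card_ne_zero
  simp only [centeringMatrix, Matrix.of_apply, sub_sq, ite_pow, one_pow, ne_eq,
    OfNat.ofNat_ne_zero, not_false_eq_true, zero_pow, mul_one, ite_mul, zero_mul, mul_ite,
    mul_zero, Finset.sum_add_distrib, Finset.sum_sub_distrib, Fintype.sum_ite_eq,
    Finset.sum_const, Finset.card_univ, nsmul_eq_mul]
  field_simp
  ring

end Centering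

/-- Coordinate `a` of the gradient of the negative log pseudolikelihood in `ρ_sj`, evaluated at
the fully factorized model, for the sample `x` of the continuous and `y` of the discrete
variable. -/
noncomputable def pseudolikelihoodGrad {ι β : Type*} [Fintype ι] [DecidableEq β]
    (x : ι → ℝ) (y : ι → β) (a : β) : ℝ :=
  ∑ i, 2 * ((if y i = a then (1 : ℝ) else 0)
      - (∑ j, if y j = a then (1 : ℝ) else 0) / Fintype.card ι)
    * ((∑ j, x j) / Fintype.card ι - x i)

lemma pseudolikelihoodGrad_eq_sum_centeringMatrix {ι β : Type*} [Fintype ι] [DecidableEq ι]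
    [DecidableEq β] (x : ι → ℝ) (y : ι → β) (a : β) (p M : ℝ) :
    pseudolikelihoodGrad x y a = -2 * ∑ q : ι × ι,
      centeringMatrix ι q.1 q.2 * (((if y q.1 = a then 1 else 0) - p) * (x q.2 - M)) := by
  rw [Fintype.sum_prod_type' fun i k =>
      centeringMatrix ι i k * (((if y i = a then 1 else 0) - p) * (x k - M)),
    neg_mul, ← mul_neg, ← sum_sub_mean_mul_mean_sub _ _ p M, pseudolikelihoodGrad,
    Finset.mul_sum]
  exact Finset.sum_congr rfl fun i _ => by ring

lemma integral_pseudolikelihoodGrad_sq {Ω ι β : Type*} [MeasurableSpace Ω] [MeasurableSpace β]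
    [MeasurableSingletonClass β] [DecidableEq β] {μ : Measure Ω} [Fintype ι] [DecidableEq ι]
    [Nonempty ι] {X : ι → Ω → ℝ} {C : ι → Ω → β}
    (hind : iIndepFun (fun i ω => (X i ω, C i ω)) μ) (hXC : ∀ i, IndepFun (X i) (C i) μ)
    (hX2 : ∀ i, MemLp (X i) 2 μ) (hC : ∀ i, AEMeasurable (C i) μ) {a : β} {M s p : ℝ}
    (hM : ∀ i, μ[X i] = M) (hs : ∀ i, variance (X i) μ = s)
    (hp : ∀ i, μ.real {ω | C i ω = a} = p) :
    ∫ ω, pseudolikelihoodGrad (X · ω) (C · ω) a ^ 2 ∂μ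
      = 4 * (Fintype.card ι - 1) * s * (p * (1 - p)) := by
  have := hind.isProbabilityMeasure
  set u : β → ℝ := fun c => (if c = a then 1 else 0) - p
  set v : ℝ → ℝ := fun x => x - M
  have hu : Measurable u :=
    (Measurable.ite (measurableSet_singleton a) measurable_const measurable_const).sub_const p
  have hu_le : ∀ c, ‖u c‖ ≤ 1 := by
    have hp0 : 0 ≤ p := hp (Classical.arbitrary ι) ▸ measureReal_nonneg
    have hp1 : p ≤ 1 := hp (Classical.arbitrary ι) ▸ measureReal_le_one
    intro c
    rw [Real.norm_eq_abs, abs_le]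
    dsimp only [u]
    constructor <;> split_ifs <;> linarith
  have hint : ∀ q r : ι × ι, Integrable
      (fun ω => u (C q.1 ω) * v (X q.2 ω) * (u (C r.1 ω) * v (X r.2 ω))) μ := by
    intro q r
    have hv : Integrable (fun ω => v (X q.2 ω) * v (X r.2 ω)) μ :=
      ((hX2 q.2).sub (memLp_const M)).integrable_mul ((hX2 r.2).sub (memLp_const M))
    refine (hv.bdd_mul (f := fun ω => u (C q.1 ω) * u (C r.1 ω)) (c := 1) ?_
      (.of_forall fun ω => ?_)).congr (.of_forall fun ω => ?_)
    · exact ((hu.comp_aemeasurable (hC q.1)).mul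
        (hu.comp_aemeasurable (hC r.1))).aestronglyMeasurable
    · rw [norm_mul]
      exact mul_le_one₀ (hu_le _) (norm_nonneg _) (hu_le _)
    · ring
  have horth : ∀ q r : ι × ι,
      ∫ ω, u (C q.1 ω) * v (X q.2 ω) * (u (C r.1 ω) * v (X r.2 ω)) ∂μ
        = if q = r then p * (1 - p) * s else 0 := by
    intro q r
    have hv0 : ∀ m, ∫ ω, v (X m ω) ∂μ = 0 := fun m => by
      rw [integral_sub ((hX2 m).integrable one_le_two) (integrable_const M), hM m]
      simp
    have hv2 : ∀ m, ∫ ω, v (X m ω) ^ 2 ∂μ = s := fun m => by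
      rw [← hs m, variance_eq_integral (hX2 m).aemeasurable, hM m]
    rw [integral_mul_mul_eq_ite (v := v) (u := u) hind hXC (fun i => (hX2 i).aemeasurable) hC
      (measurable_id.sub_const M) hu hv0 hv2
      (fun m => integral_ite_eq_one_zero_sub (hC m) (hp m))
      (fun m => integral_ite_eq_one_zero_sub_sq (hC m) (hp m))]
  have hgrad : ∀ ω, pseudolikelihoodGrad (X · ω) (C · ω) a
      = -2 * ∑ q : ι × ι, centeringMatrix ι q.1 q.2 * (u (C q.1 ω) * v (X q.2 ω)) :=
    fun ω => pseudolikelihoodGrad_eq_sum_centeringMatrix _ _ a p M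
  simp_rw [hgrad, mul_pow, integral_const_mul]
  rw [integral_sq_sum_mul_of_orthogonal hint horth,
    Fintype.sum_prod_type' fun i k => centeringMatrix ι i k ^ 2, sum_centeringMatrix_sq]
  ring

theorem calibration_weight_cts_discrete_general {Ω : Type*} [MeasurableSpace Ω] (μ : Measure Ω)
    (n : ℕ) (hn : 0 < n) (L : ℕ)
    (X : Fin n → Ω → ℝ) (C : Fin n → Ω → Fin L) (pa : Fin L → ℝ)
    (hX2 : ∀ i, MemLp (X i) 2 μ)
    (hpa : ∀ i a, (μ {ω | C i ω = a}).toReal = pa a)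
    (hiid : iIndepFun (fun i ω => (X i ω, C i ω)) μ)
    (hident : ∀ i, IdentDistrib (fun ω => (X i ω, C i ω)) (fun ω => (X ⟨0, hn⟩ ω, C ⟨0, hn⟩ ω)) μ μ)
    (hXC : ∀ i, IndepFun (X i) (C i) μ) :
    ∑ a : Fin L, ∫ ω,
        (∑ i, 2 * ((if C i ω = a then (1 : ℝ) else 0)
              - (∑ j, if C j ω = a then (1 : ℝ) else 0) / n)
            * ((∑ j, X j ω) / n - X i ω)) ^ 2 ∂μ
      = 4 * (n - 1 : ℝ) * variance (X ⟨0, hn⟩) μ * ∑ a : Fin L, pa a * (1 - pa a) := by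
  have : Nonempty (Fin n) := ⟨⟨0, hn⟩⟩
  have hXident : ∀ i, IdentDistrib (X i) (X ⟨0, hn⟩) μ μ := fun i =>
    (hident i).comp measurable_fst
  have key : ∀ a, ∫ ω, pseudolikelihoodGrad (X · ω) (C · ω) a ^ 2 ∂μ
      = 4 * (Fintype.card (Fin n) - 1) * variance (X ⟨0, hn⟩) μ * (pa a * (1 - pa a)) :=
    fun a => integral_pseudolikelihoodGrad_sq hiid hXC hX2
      (fun i => (hident i).aemeasurable_fst.snd) (fun i => (hXident i).integral_eq)
      (fun i => (hXident i).variance_eq) (fun i => hpa i a)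
  simp only [pseudolikelihoodGrad, Fintype.card_fin] at key
  simp only [key, Finset.mul_sum]

/-- Calibration weight identity for a continuous–discrete edge: for i.i.d. pairs (Xᵢ, Cᵢ) with
Xᵢ ⊥ Cᵢ, ∑ₐ E[(∑ᵢ 2(1{Cᵢ=a} - p̂ₐ)(X̄ - Xᵢ))²] = 4(n-1)·σ²·∑ₐ pₐ(1-pₐ). -/
theorem calibration_weight_cts_discrete {Ω : Type*} [MeasurableSpace Ω] (μ : Measure Ω)
    [IsProbabilityMeasure μ] (n : ℕ) (hn : 0 < n) (L : ℕ)
    (X : Fin n → Ω → ℝ) (C : Fin n → Ω → Fin L) (pa : Fin L → ℝ)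
    (hmX : ∀ i, Measurable (X i)) (hmC : ∀ i, Measurable (C i))
    (hX2 : ∀ i, MemLp (X i) 2 μ)
    (hpa : ∀ i a, (μ {ω | C i ω = a}).toReal = pa a)
    (hiid : iIndepFun (fun i ω => (X i ω, C i ω)) μ)
    (hident : ∀ i, IdentDistrib (fun ω => (X i ω, C i ω)) (fun ω => (X ⟨0, hn⟩ ω, C ⟨0, hn⟩ ω)) μ μ)
    (hXC : ∀ i, IndepFun (X i) (C i) μ) :
    ∑ a : Fin L, ∫ ω,
        (∑ i, 2 * ((if C i ω = a then (1 : ℝ) else 0)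
              - (∑ j, if C j ω = a then (1 : ℝ) else 0) / n)
            * ((∑ j, X j ω) / n - X i ω)) ^ 2 ∂μ
      = 4 * (n - 1 : ℝ) * variance (X ⟨0, hn⟩) μ * ∑ a : Fin L, pa a * (1 - pa a) :=
  calibration_weight_cts_discrete_general μ n hn L X C pa hX2 hpa hiid hident hXC
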